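/- Let f : X × [0,1] → [0,1] be such that y ↦ f(x,y) is non-decreasing for every x ∈ X, and fix points x_1,…,x_T ∈ X. For any fixed C ≥ 0 and any integer T ≥ 1, both y ↦ ψ_{T,+}^{-1}(y,C) and y ↦ ψ_{T,-}^{-1}(y,C) are non-decreasing on [0,1]. -/

import Mathlib

open MeasureTheory Set

/-- Extended-real logarithm: `log ⊤ = ⊤`, `log x = -∞` for `x ≤ 0` (in particular `log 0 = -∞`). -/
noncomputable def elog (x : EReal) : EReal :=
  if x = ⊤ then ⊤ else if x ≤ 0 then ⊥ else ((Real.log x.toReal : ℝ) : EReal)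

/-- Lower endpoint `-1/(1-μ)` of the betting interval, with the convention `1/0 = +∞`. -/
noncomputable def betLower (μ : ℝ) : EReal := if μ = 1 then ⊥ else ((-(1 - μ)⁻¹ : ℝ) : EReal)

/-- Upper endpoint `1/μ` of the betting interval, with the convention `1/0 = +∞`. -/
noncomputable def betUpper (μ : ℝ) : EReal := if μ = 0 then ⊤ else ((μ⁻¹ : ℝ) : EReal)

/-- The betting interval `A_μ = [-1/(1-μ), 1/μ]` (as a set of extended reals). -/
noncomputable def betSet (μ : ℝ) : Set EReal := Set.Icc (betLower μ) (betUpper μ)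

/-- `ψ_T(y, μ) = sup_{α ∈ A_μ} ∑_{t=1}^T log(1 + α (f(x_t, y) - μ))`, with the EReal
conventions (`0 * ±∞ = 0`, `log 0 = -∞`). -/
noncomputable def psiT {X : Type*} {T : ℕ} (f : X → ℝ → ℝ) (x : Fin T → X) (y μ : ℝ) : EReal :=
  ⨆ α ∈ betSet μ, ∑ t : Fin T, elog (1 + α * ((f (x t) y - μ : ℝ) : EReal))

/-- The upper inverse `ψ_{T,+}^{-1}(y, C) = sup {μ ∈ [0,1] : ψ_T(y, μ) ≤ C}`. -/
noncomputable def psiTInvPlus {X : Type*} {T : ℕ} (f : X → ℝ → ℝ) (x : Fin T → X)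
    (y : ℝ) (C : EReal) : ℝ :=
  sSup {μ : ℝ | μ ∈ Set.Icc (0 : ℝ) 1 ∧ psiT f x y μ ≤ C}

/-- The lower inverse `ψ_{T,-}^{-1}(y, C) = inf {μ ∈ [0,1] : ψ_T(y, μ) ≤ C}`. -/
noncomputable def psiTInvMinus {X : Type*} {T : ℕ} (f : X → ℝ → ℝ) (x : Fin T → X)
    (y : ℝ) (C : EReal) : ℝ :=
  sInf {μ : ℝ | μ ∈ Set.Icc (0 : ℝ) 1 ∧ psiT f x y μ ≤ C}

/-!
Splitting the bets `α ∈ A_μ` by sign writes `ψ_T(y, μ)` as the maximum of a part `ψ⁺` over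
`α ≥ 0`, non-decreasing in `y` and non-increasing in `μ`, and a part `ψ⁻` over `α ≤ 0`, with the
opposite monotonicities. Since `log (1 + u) ≤ u`, every bet has non-positive log-wealth against the
empirical mean `m(y)` of the sample `f(x_t, y)`, so `m(y)` lies in every sublevel set
`{μ | ψ_T(y, μ) ≤ C}`. For `y ≤ y'`, a point `μ ≥ m(y')` of the sublevel set at `y` stays in the
one at `y'`: `ψ⁻(y', μ) ≤ ψ⁻(y, μ)` and `ψ⁺(y', μ) ≤ ψ⁺(y', m(y'))`; points below `m(y')` are
dominated by `m(y')` itself. This compares the suprema; the infima are handled symmetrically.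
-/

open scoped BigOperators

lemma elog_monotone : Monotone elog := by
  intro a b hab
  unfold elog
  by_cases hb : b = ⊤
  · simp [hb]
  have ha : a ≠ ⊤ := ne_top_of_le_ne_top hb hab
  by_cases ha0 : a ≤ 0
  · simp [ha, ha0]
  have hb0 : ¬ b ≤ 0 := fun h => ha0 (hab.trans h)
  have ha_bot : a ≠ ⊥ := fun h => ha0 (h ▸ bot_le)
  simp only [ha, hb, ha0, hb0, if_false, EReal.coe_le_coe_iff]
  exact Real.log_le_log (EReal.toReal_pos (lt_of_not_ge ha0) ha)
    (EReal.toReal_le_toReal hab ha_bot hb)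

lemma elog_one : elog 1 = 0 := by
  simp [elog, show (1 : EReal) ≠ ⊤ from EReal.coe_ne_top 1]

lemma elog_coe_le_sub_one (s : ℝ) : elog s ≤ ((s - 1 : ℝ) : EReal) := by
  by_cases hs : (s : EReal) ≤ 0
  · simp [elog, hs]
  have hpos : 0 < s := by exact_mod_cast not_le.mp hs
  simp only [elog, EReal.coe_ne_top, if_false, hs, EReal.toReal_coe, EReal.coe_le_coe_iff]
  linarith [Real.log_le_sub_one_of_pos hpos]

lemma betLower_nonpos {μ : ℝ} (hμ : μ ≤ 1) : betLower μ ≤ 0 := by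
  unfold betLower
  split_ifs with h
  · exact bot_le
  · have : 0 ≤ (1 - μ)⁻¹ := inv_nonneg.2 (sub_nonneg.2 hμ)
    exact_mod_cast neg_nonpos.2 this

lemma betUpper_nonneg {μ : ℝ} (hμ : 0 ≤ μ) : 0 ≤ betUpper μ := by
  unfold betUpper
  split_ifs with h
  · exact le_top
  · exact_mod_cast inv_nonneg.2 hμ

lemma betLower_antitoneOn : AntitoneOn betLower (Iic 1) := by
  intro μ _ μ' (hμ' : μ' ≤ 1) h
  rcases eq_or_lt_of_le hμ' with rfl | hlt
  · simp [betLower]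
  have hμ : μ ≠ 1 := (h.trans_lt hlt).ne
  simp only [betLower, hlt.ne, hμ, if_false, EReal.coe_le_coe_iff]
  exact neg_le_neg (inv_anti₀ (sub_pos.2 hlt) (by linarith))

lemma betUpper_antitoneOn : AntitoneOn betUpper (Ici 0) := by
  intro μ (hμ : 0 ≤ μ) μ' _ h
  rcases eq_or_lt_of_le hμ with rfl | hpos
  · simp [betUpper]
  have hμ' : μ' ≠ 0 := (hpos.trans_le h).ne'
  simp only [betUpper, hpos.ne', hμ', if_false, EReal.coe_le_coe_iff]
  exact inv_anti₀ hpos h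

lemma betLower_eq_bot_iff {μ : ℝ} : betLower μ = ⊥ ↔ μ = 1 := by
  unfold betLower
  split_ifs with h <;> simp [h]

lemma betUpper_eq_top_iff {μ : ℝ} : betUpper μ = ⊤ ↔ μ = 0 := by
  unfold betUpper
  split_ifs with h <;> simp [h]

lemma betSet_eq_union {μ : ℝ} (hμ : μ ∈ Icc (0 : ℝ) 1) :
    betSet μ = Icc (betLower μ) 0 ∪ Icc 0 (betUpper μ) :=
  (Icc_union_Icc_eq_Icc (betLower_nonpos hμ.2) (betUpper_nonneg hμ.1)).symm

lemma EReal.coe_finset_sum {ι : Type*} (s : Finset ι) (g : ι → ℝ) :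
    ((∑ i ∈ s, g i : ℝ) : EReal) = ∑ i ∈ s, (g i : EReal) :=
  map_sum (⟨⟨((↑) : ℝ → EReal), EReal.coe_zero⟩, EReal.coe_add⟩ : ℝ →+ EReal) g s

section LogWealth

variable {ι : Type*} [Fintype ι]

noncomputable def logWealth (d : ι → ℝ) (α : EReal) : EReal :=
  ∑ i, elog (1 + α * (d i : EReal))

lemma logWealth_monotone {α : EReal} (hα : 0 ≤ α) : Monotone (logWealth (ι := ι) · α) :=
  fun _ _ hd => Finset.sum_le_sum fun i _ =>
    elog_monotone <|
      add_le_add_right (mul_le_mul_of_nonneg_left (EReal.coe_le_coe_iff.2 (hd i)) hα) 1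

lemma logWealth_antitone {α : EReal} (hα : α ≤ 0) : Antitone (logWealth (ι := ι) · α) :=
  fun _ _ hd => Finset.sum_le_sum fun i _ => by
    rw [mul_comm α, mul_comm α]
    exact elog_monotone (add_le_add_right
      (EReal.mul_le_mul_of_nonpos_right (EReal.coe_le_coe_iff.2 (hd i)) hα) 1)

lemma logWealth_zero (α : EReal) : logWealth (fun _ : ι => 0) α = 0 := by
  simp [logWealth, elog_one]

lemma logWealth_coe_nonpos {d : ι → ℝ} (hd : ∑ i, d i = 0) (a : ℝ) : logWealth d a ≤ 0 :=
  calc logWealth d a ≤ ∑ i, ((a * d i : ℝ) : EReal) := Finset.sum_le_sum fun i _ => by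
        simpa using elog_coe_le_sub_one (1 + a * d i)
    _ = ((a * ∑ i, d i : ℝ) : EReal) := by rw [Finset.mul_sum, EReal.coe_finset_sum]
    _ = 0 := by simp [hd]

end LogWealth

section Psi

variable {ι : Type*} [Fintype ι]

/-- `psiT f x y μ` is `psi (fun t => f (x t) y) μ` by definition. -/
noncomputable def psi (z : ι → ℝ) (μ : ℝ) : EReal :=
  ⨆ α ∈ betSet μ, logWealth (fun i => z i - μ) α

noncomputable def psiNonneg (z : ι → ℝ) (μ : ℝ) : EReal :=
  ⨆ α ∈ Icc 0 (betUpper μ), logWealth (fun i => z i - μ) α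

noncomputable def psiNonpos (z : ι → ℝ) (μ : ℝ) : EReal :=
  ⨆ α ∈ Icc (betLower μ) 0, logWealth (fun i => z i - μ) α

lemma psi_eq_sup {z : ι → ℝ} {μ : ℝ} (hμ : μ ∈ Icc (0 : ℝ) 1) :
    psi z μ = psiNonpos z μ ⊔ psiNonneg z μ := by
  rw [psi, betSet_eq_union hμ, iSup_union, psiNonpos, psiNonneg]

lemma psiNonneg_mono {z z' : ι → ℝ} (hz : z ≤ z') (μ : ℝ) : psiNonneg z μ ≤ psiNonneg z' μ :=
  iSup₂_mono fun _ hα => logWealth_monotone hα.1 fun i => sub_le_sub_right (hz i) μ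

lemma psiNonpos_anti {z z' : ι → ℝ} (hz : z ≤ z') (μ : ℝ) : psiNonpos z' μ ≤ psiNonpos z μ :=
  iSup₂_mono fun _ hα => logWealth_antitone hα.2 fun i => sub_le_sub_right (hz i) μ

lemma psiNonneg_antitoneOn (z : ι → ℝ) : AntitoneOn (psiNonneg z) (Ici 0) :=
  fun _ hμ _ hμ' h => iSup₂_le fun α hα =>
    le_iSup₂_of_le α ⟨hα.1, hα.2.trans (betUpper_antitoneOn hμ hμ' h)⟩ <|
      logWealth_monotone hα.1 fun i => sub_le_sub_left h (z i)

lemma psiNonpos_monotoneOn (z : ι → ℝ) : MonotoneOn (psiNonpos z) (Iic 1) :=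
  fun _ hμ _ hμ' h => iSup₂_le fun α hα =>
    le_iSup₂_of_le α ⟨(betLower_antitoneOn hμ hμ' h).trans hα.1, hα.2⟩ <|
      logWealth_antitone hα.2 fun i => sub_le_sub_left h (z i)

lemma psi_le_iff {z : ι → ℝ} {μ : ℝ} (hμ : μ ∈ Icc (0 : ℝ) 1) {C : EReal} :
    psi z μ ≤ C ↔ psiNonpos z μ ≤ C ∧ psiNonneg z μ ≤ C := by
  rw [psi_eq_sup hμ, sup_le_iff]

end Psi

section Mean

variable {ι : Type*} [Fintype ι]

lemma sum_sub_expect (z : ι → ℝ) : ∑ i, (z i - 𝔼 j, z j) = 0 := by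
  rw [Finset.sum_sub_distrib, Finset.sum_const, Finset.card_univ, Fintype.card_smul_expect,
    sub_self]

lemma expect_mem_Icc {z : ι → ℝ} (hz : ∀ i, z i ∈ Icc (0 : ℝ) 1) : 𝔼 i, z i ∈ Icc (0 : ℝ) 1 := by
  refine ⟨Finset.expect_nonneg fun i _ => (hz i).1, ?_⟩
  rcases isEmpty_or_nonempty ι with hι | hι
  · simp
  · exact Finset.expect_le Finset.univ_nonempty fun i _ => (hz i).2

lemma psi_expect_nonpos {z : ι → ℝ} (hz : ∀ i, z i ∈ Icc (0 : ℝ) 1) : psi z (𝔼 i, z i) ≤ 0 := by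
  set m := 𝔼 i, z i
  have hsum : ∑ i, (z i - m) = 0 := sum_sub_expect z
  refine iSup₂_le fun α hα => ?_
  induction α using EReal.rec with
  -- An infinite bet is only admissible against `m = 0` or `m = 1`, where the sample is constant.
  | bot =>
    have hm : m = 1 := betLower_eq_bot_iff.1 (le_bot_iff.1 hα.1)
    have hdev : (fun i => z i - m) = fun _ => 0 := funext fun i =>
      (Finset.sum_eq_zero_iff_of_nonpos fun i _ => by linarith [(hz i).2]).1 hsum i
        (Finset.mem_univ i)
    rw [hdev, logWealth_zero]
  | top =>
    have hm : m = 0 := betUpper_eq_top_iff.1 (top_le_iff.1 hα.2)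
    have hdev : (fun i => z i - m) = fun _ => 0 := funext fun i =>
      (Finset.sum_eq_zero_iff_of_nonneg fun i _ => by linarith [(hz i).1]).1 hsum i
        (Finset.mem_univ i)
    rw [hdev, logWealth_zero]
  | coe a => exact logWealth_coe_nonpos hsum a

end Mean

section Sublevel

variable {ι : Type*} [Fintype ι] {z z' : ι → ℝ} {C : EReal} {μ : ℝ}

def psiSublevel (z : ι → ℝ) (C : EReal) : Set ℝ :=
  {μ : ℝ | μ ∈ Icc (0 : ℝ) 1 ∧ psi z μ ≤ C}

lemma expect_mem_psiSublevel (hz : ∀ i, z i ∈ Icc (0 : ℝ) 1) (hC : 0 ≤ C) :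
    𝔼 i, z i ∈ psiSublevel z C :=
  ⟨expect_mem_Icc hz, (psi_expect_nonpos hz).trans hC⟩

lemma mem_psiSublevel_of_expect_le (hz : z ≤ z') (hz' : ∀ i, z' i ∈ Icc (0 : ℝ) 1)
    (hC : 0 ≤ C) (hμ : μ ∈ psiSublevel z C) (hm : 𝔼 i, z' i ≤ μ) : μ ∈ psiSublevel z' C := by
  obtain ⟨hm01, hmC⟩ := expect_mem_psiSublevel hz' hC
  refine ⟨hμ.1, (psi_le_iff hμ.1).2 ⟨?_, ?_⟩⟩
  · exact (psiNonpos_anti hz μ).trans ((psi_le_iff hμ.1).1 hμ.2).1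
  · exact (psiNonneg_antitoneOn z' hm01.1 hμ.1.1 hm).trans ((psi_le_iff hm01).1 hmC).2

lemma mem_psiSublevel_of_le_expect (hz : z ≤ z') (hz0 : ∀ i, z i ∈ Icc (0 : ℝ) 1)
    (hC : 0 ≤ C) (hμ : μ ∈ psiSublevel z' C) (hm : μ ≤ 𝔼 i, z i) : μ ∈ psiSublevel z C := by
  obtain ⟨hm01, hmC⟩ := expect_mem_psiSublevel hz0 hC
  refine ⟨hμ.1, (psi_le_iff hμ.1).2 ⟨?_, ?_⟩⟩
  · exact (psiNonpos_monotoneOn z hμ.1.2 hm01.2 hm).trans ((psi_le_iff hm01).1 hmC).1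
  · exact (psiNonneg_mono hz μ).trans ((psi_le_iff hμ.1).1 hμ.2).2

lemma sSup_psiSublevel_mono (hz : z ≤ z') (hz0 : ∀ i, z i ∈ Icc (0 : ℝ) 1)
    (hz'0 : ∀ i, z' i ∈ Icc (0 : ℝ) 1) (hC : 0 ≤ C) :
    sSup (psiSublevel z C) ≤ sSup (psiSublevel z' C) := by
  have hbdd : BddAbove (psiSublevel z' C) := ⟨1, fun _ hμ => hμ.1.2⟩
  refine csSup_le ⟨_, expect_mem_psiSublevel hz0 hC⟩ fun μ hμ => ?_
  rcases le_total (𝔼 i, z' i) μ with hm | hm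
  · exact le_csSup hbdd (mem_psiSublevel_of_expect_le hz hz'0 hC hμ hm)
  · exact hm.trans (le_csSup hbdd (expect_mem_psiSublevel hz'0 hC))

lemma sInf_psiSublevel_mono (hz : z ≤ z') (hz0 : ∀ i, z i ∈ Icc (0 : ℝ) 1)
    (hz'0 : ∀ i, z' i ∈ Icc (0 : ℝ) 1) (hC : 0 ≤ C) :
    sInf (psiSublevel z C) ≤ sInf (psiSublevel z' C) := by
  have hbdd : BddBelow (psiSublevel z C) := ⟨0, fun _ hμ => hμ.1.1⟩
  refine le_csInf ⟨_, expect_mem_psiSublevel hz'0 hC⟩ fun μ hμ => ?_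
  rcases le_total μ (𝔼 i, z i) with hm | hm
  · exact csInf_le hbdd (mem_psiSublevel_of_le_expect hz hz0 hC hμ hm)
  · exact (csInf_le hbdd (expect_mem_psiSublevel hz0 hC)).trans hm

end Sublevel

theorem psiTInv_mono_in_y_general {X : Type*} {T : ℕ}
    (f : X → ℝ → ℝ) (hrange : ∀ x, ∀ y ∈ Set.Icc (0 : ℝ) 1, f x y ∈ Set.Icc (0 : ℝ) 1)
    (hmono : ∀ x, MonotoneOn (f x) (Set.Icc (0 : ℝ) 1))
    (x : Fin T → X) (C : EReal) (hC : 0 ≤ C) :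
    MonotoneOn (fun y => psiTInvPlus f x y C) (Set.Icc (0 : ℝ) 1) ∧
    MonotoneOn (fun y => psiTInvMinus f x y C) (Set.Icc (0 : ℝ) 1) := by
  have hsample : ∀ y ∈ Icc (0 : ℝ) 1, ∀ t, f (x t) y ∈ Icc (0 : ℝ) 1 :=
    fun y hy t => hrange (x t) y hy
  refine ⟨fun y hy y' hy' hyy' => ?_, fun y hy y' hy' hyy' => ?_⟩
  · exact sSup_psiSublevel_mono (fun t => hmono (x t) hy hy' hyy') (hsample y hy)
      (hsample y' hy') hC
  · exact sInf_psiSublevel_mono (fun t => hmono (x t) hy hy' hyy') (hsample y hy)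
      (hsample y' hy') hC

/-- If `y ↦ f(x, y)` is non-decreasing on `[0,1]` for every `x`, then for any fixed `C ≥ 0`
both `y ↦ ψ_{T,+}^{-1}(y, C)` and `y ↦ ψ_{T,-}^{-1}(y, C)` are non-decreasing on `[0,1]`. -/
theorem psiTInv_mono_in_y {X : Type*} {T : ℕ} (hT : 1 ≤ T)
    (f : X → ℝ → ℝ) (hrange : ∀ x, ∀ y ∈ Set.Icc (0 : ℝ) 1, f x y ∈ Set.Icc (0 : ℝ) 1)
    (hmono : ∀ x, MonotoneOn (f x) (Set.Icc (0 : ℝ) 1))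
    (x : Fin T → X) (C : EReal) (hC : 0 ≤ C) :
    MonotoneOn (fun y => psiTInvPlus f x y C) (Set.Icc (0 : ℝ) 1) ∧
    MonotoneOn (fun y => psiTInvMinus f x y C) (Set.Icc (0 : ℝ) 1) :=
  psiTInv_mono_in_y_general f hrange hmono x C hC
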